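/- arXiv:1507.07327 — 6 statements merged into one kernel-verified Lean document; each statement's English description precedes it below -/
import Mathlib

section
/- For a bipartite no-signaling box P(a,b|x,y) with binary inputs and outputs, if P(1,1|0,0) > 0, P(1,1|0,1) = 0, P(1,1|1,0) = 0, and P(2,2|1,1) = 0, then P cannot be written as a convex combination of product distributions (it is not local). -/
/-- Outcomes `1,2` are encoded as `0,1 : Fin 2`; inputs `x,y ∈ {0,1}` as `Fin 2`.
`P a b x y` is the probability of outcomes `(a,b)` given inputs `(x,y)`. -/
theorem stmt_3 (P : Fin 2 → Fin 2 → Fin 2 → Fin 2 → ℝ)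
    (hnn : ∀ a b x y, 0 ≤ P a b x y)
    (hnorm : ∀ x y, ∑ a, ∑ b, P a b x y = 1)
    (hnsA : ∀ b y x x', ∑ a, P a b x y = ∑ a, P a b x' y)
    (hnsB : ∀ a x y y', ∑ b, P a b x y = ∑ b, P a b x y')
    (h1 : 0 < P 0 0 0 0) (h2 : P 0 0 0 1 = 0) (h3 : P 0 0 1 0 = 0)
    (h4 : P 1 1 1 1 = 0) :
    ¬ ∃ (Λ : Type) (_ : Fintype Λ) (w : Λ → ℝ)
        (Q R : Λ → Fin 2 → Fin 2 → ℝ),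
      (∀ l, 0 ≤ w l) ∧ (∑ l, w l = 1) ∧
      (∀ l a x, 0 ≤ Q l a x) ∧ (∀ l x, ∑ a, Q l a x = 1) ∧
      (∀ l b y, 0 ≤ R l b y) ∧ (∀ l y, ∑ b, R l b y = 1) ∧
      (∀ a b x y, P a b x y = ∑ l, w l * Q l a x * R l b y) := by
  rintro ⟨Λ, hΛ, w, Q, R, hw, hwsum, hQnn, hQsum, hRnn, hRsum, hP⟩
  have term_nn : ∀ (l : Λ) (a b x y : Fin 2), 0 ≤ w l * Q l a x * R l b y := by
    intro l a b x y
    exact mul_nonneg (mul_nonneg (hw l) (hQnn l a x)) (hRnn l b y)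
  -- from h1, there exists l with positive term
  have h1' : 0 < ∑ l, w l * Q l 0 0 * R l 0 0 := by rw [← hP]; exact h1
  obtain ⟨l, -, hl⟩ := Finset.exists_lt_of_sum_lt (f := fun _ : Λ => (0:ℝ))
    (by simpa using h1')
  have hwl : 0 < w l := by
    rcases lt_or_eq_of_le (hw l) with h | h
    · exact h
    · simp [← h] at hl
  have hQ00 : 0 < Q l 0 0 := by
    rcases lt_or_eq_of_le (hQnn l 0 0) with h | h
    · exact h
    · simp [← h] at hl
  -- each term of a zero sum of nonnegatives is zero
  have zero_term : ∀ (a b x y : Fin 2), P a b x y = 0 →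
      w l * Q l a x * R l b y = 0 := by
    intro a b x y h
    have := (Finset.sum_eq_zero_iff_of_nonneg
      (fun i _ => term_nn i a b x y)).mp (by rw [← hP]; exact h)
    exact this l (Finset.mem_univ l)
  -- From h2: R l 0 1 = 0, hence R l 1 1 = 1
  have hR01 : R l 0 1 = 0 := by
    have := zero_term 0 0 0 1 h2
    rcases mul_eq_zero.mp this with h | h
    · rcases mul_eq_zero.mp h with h | h
      · exact absurd h hwl.ne'
      · exact absurd h hQ00.ne'
    · exact h
  have hR11 : R l 1 1 = 1 := by
    have := hRsum l 1
    rw [Fin.sum_univ_two] at this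
    linarith
  -- From h3: Q l 0 1 = 0, hence Q l 1 1 = 1
  have hR00 : 0 < R l 0 0 := by
    rcases lt_or_eq_of_le (hRnn l 0 0) with h | h
    · exact h
    · simp [← h] at hl
  have hQ01 : Q l 0 1 = 0 := by
    have := zero_term 0 0 1 0 h3
    rcases mul_eq_zero.mp this with h | h
    · rcases mul_eq_zero.mp h with h | h
      · exact absurd h hwl.ne'
      · exact h
    · exact absurd h hR00.ne'
  have hQ11 : Q l 1 1 = 1 := by
    have := hQsum l 1
    rw [Fin.sum_univ_two] at this
    linarith
  -- contradiction with h4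
  have := zero_term 1 1 1 1 h4
  rw [hQ11, hR11] at this
  simp at this
  exact hwl.ne' this
end

section
/- For a bipartite box where each party has two measurement settings u,v and two outcomes 1,2, with P(¬2,1|v,u)=0, P(1,¬2|u,v)=0 and P(2,2|v,v)=0, any deterministic local model (a : settings → outcomes, b : settings → outcomes) satisfying a(u)=1 and b(u)=1 must have a(v)=2 (since a(v)≠2 contradicts P(¬2,1|v,u)=0) and b(v)=2 (since b(v)≠2 contradicts P(1,¬2|u,v)=0), which contradicts P(2,2|v,v)=0; hence no such deterministic local model exists. -/
/-- Settings: `0 = u`, `1 = v`; outcomes `1,2` encoded as `0,1 : Fin 2`.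
No deterministic local assignment is consistent with the Hardy conditions
`P(1,1|u,u) > 0`, `P(k,1|v,u) = 0` for `k ≠ 2`, `P(1,k|u,v) = 0` for `k ≠ 2`,
`P(2,2|v,v) = 0`. -/
theorem stmt_4 :
    ¬ ∃ a b : Fin 2 → Fin 2,
      a 0 = 0 ∧ b 0 = 0 ∧
      (∀ k : Fin 2, k ≠ 1 → ¬ (a 1 = k ∧ b 0 = 0)) ∧
      (∀ k : Fin 2, k ≠ 1 → ¬ (a 0 = 0 ∧ b 1 = k)) ∧
      ¬ (a 1 = 1 ∧ b 1 = 1) := by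
  rintro ⟨a, b, h1, h2, h3, h4, h5⟩
  have ha : a 1 = 1 := by
    have := h3 (a 1)
    by_contra h
    exact this h ⟨rfl, h2⟩
  have hb : b 1 = 1 := by
    have := h4 (b 1)
    by_contra h
    exact this h ⟨h1, rfl⟩
  exact h5 ⟨ha, hb⟩
end

section
/- Fix d ≥ 2. Any deterministic assignment of outcomes a, b : {u,v} → Fin d satisfying: a(u)=0 ∧ b(u)=0 (the all-ones event), a(v)=d-1 (forced since outcomes ≠ d-1 under setting v given b(u)=0 are forbidden), b(v)=d-1 (similarly forced), contradicts the condition that the joint outcome (d-1, d-1) under settings (v,v) is forbidden. Hence no deterministic local model satisfies the d-dimensional Hardy conditions. -/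
/-- Settings: `0 = u`, `1 = v`; outcomes in `Fin d` with `0` the "all-ones" outcome
and `⟨d-1,_⟩` the last outcome. No deterministic local assignment satisfies the
`d`-dimensional Hardy conditions. -/
theorem stmt_5 {d : ℕ} (hd : 2 ≤ d) :
    ¬ ∃ a b : Fin 2 → Fin d,
      a 0 = ⟨0, by omega⟩ ∧ b 0 = ⟨0, by omega⟩ ∧
      (∀ k : Fin d, k ≠ ⟨d - 1, by omega⟩ → ¬ (a 1 = k ∧ b 0 = ⟨0, by omega⟩)) ∧
      (∀ k : Fin d, k ≠ ⟨d - 1, by omega⟩ → ¬ (a 0 = ⟨0, by omega⟩ ∧ b 1 = k)) ∧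
      ¬ (a 1 = ⟨d - 1, by omega⟩ ∧ b 1 = ⟨d - 1, by omega⟩) := by
  rintro ⟨a, b, ha0, hb0, h1, h2, h3⟩
  have ha1 : a 1 = ⟨d - 1, by omega⟩ := by
    by_contra h
    exact h1 (a 1) h ⟨rfl, hb0⟩
  have hb1 : b 1 = ⟨d - 1, by omega⟩ := by
    by_contra h
    exact h2 (b 1) h ⟨ha0, rfl⟩
  exact h3 ⟨ha1, hb1⟩
end

section
/- Let N ≥ 2 and fix a bipartition of {1,…,N} into nonempty sets α and its complement ᾱ. Suppose a product distribution P(x|X) = Q(x_α | X_α) · R(x_ᾱ | X_ᾱ) satisfies the N-partite higher-dimensional Hardy conditions: (i) P(1…1|u…u) = q > 0; (ii) for each r, P(1…1, x_r, 1…1 | u…u, v_r, u…u) = 0 whenever x_r ≠ d_r; (iii) for fixed j and all i ≠ j, P with outcomes d_i at position i and d_j at position j (settings v_i, v_j, others u) = 0. Then we obtain a contradiction; hence no product (bilocal) distribution satisfies all conditions. -/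
/-- Settings of party `i` are `Bool` (`false = u_i`, `true = v_i`); outcomes of party
`i` lie in `Fin (d i + 2)` (so party `i` has at least two outcomes), where `0` encodes
the outcome "1" and `Fin.last (d i + 1)` encodes the last outcome "d_i". -/
def IsBox {ι : Type} [Fintype ι] [DecidableEq ι] (o : ι → ℕ)
    (B : (∀ i, Fin (o i)) → (ι → Bool) → ℝ) : Prop :=
  (∀ x X, 0 ≤ B x X) ∧ ∀ X, ∑ x, B x X = 1

/-- No-signaling: the marginal on any subset `S` of parties is independent of the
settings of the remaining parties. -/
def NoSignaling {ι : Type} [Fintype ι] [DecidableEq ι] (o : ι → ℕ)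
    (B : (∀ i, Fin (o i)) → (ι → Bool) → ℝ) : Prop :=
  ∀ (S : Finset ι) (x : ∀ i, Fin (o i)) (X X' : ι → Bool),
    (∀ i ∈ S, X i = X' i) →
    (∑ y : ∀ i, Fin (o i), if ∀ i ∈ S, y i = x i then B y X else 0) =
    (∑ y : ∀ i, Fin (o i), if ∀ i ∈ S, y i = x i then B y X' else 0)

/-! Both factors are positive at `(1…1 | u…u)` because their product is `q > 0`. If party
`r` lies in `α`, condition (ii) forces outcome `d_r` once `r` switches to `v_r` while the
others of `α` read `1`; since the marginal of `α \ {r}` does not see that switch,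
`Q(1…d_r…1 | u…v_r…u) ≥ Q(1…1 | u…u) > 0`, and likewise for `R`. For `i` and `j` on
opposite sides of the bipartition, the probability in (iii) is the product of two such
positive numbers. -/

open Finset Function

section Marginal

variable {ι : Type} [Fintype ι] [DecidableEq ι] {o : ι → ℕ}

theorem sum_ite_forall_mem_compl_singleton {M : Type*} [AddCommMonoid M]
    (f : (∀ i, Fin (o i)) → M) (z : ∀ i, Fin (o i)) (r : ι) :
    (∑ y, if ∀ i ∈ ({r}ᶜ : Finset ι), y i = z i then f y else 0) =
      ∑ a, f (update z r a) := by
  have hfiber : univ.filter (fun y => ∀ i ∈ ({r}ᶜ : Finset ι), y i = z i) =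
      univ.image (update z r) := by
    ext y
    simp only [mem_filter, mem_univ, true_and, mem_image, mem_compl, mem_singleton]
    refine ⟨fun h => ⟨y r, update_eq_iff.2 ⟨rfl, fun i hi => (h i hi).symm⟩⟩, ?_⟩
    rintro ⟨a, rfl⟩ i hi
    exact update_of_ne hi _ _
  rw [← sum_filter, hfiber, sum_image fun a _ b _ h => update_injective z r h]

theorem NoSignaling.le_apply_update {B : (∀ i, Fin (o i)) → (ι → Bool) → ℝ}
    (hns : NoSignaling o B) (hB : IsBox o B) {z : ∀ i, Fin (o i)} {r : ι}
    {X X' : ι → Bool} (hX : ∀ i ≠ r, X i = X' i) (ℓ : Fin (o r))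
    (hzero : ∀ a ≠ ℓ, B (update z r a) X' = 0) :
    B z X ≤ B (update z r ℓ) X' :=
  calc B z X = B (update z r (z r)) X := by rw [update_eq_self]
    _ ≤ ∑ a, B (update z r a) X := single_le_sum (fun a _ => hB.1 _ _) (mem_univ _)
    _ = ∑ a, B (update z r a) X' := by
      rw [← sum_ite_forall_mem_compl_singleton (B · X),
        ← sum_ite_forall_mem_compl_singleton (B · X')]
      exact hns _ z X X' fun i hi => hX i (by simpa using hi)
    _ = B (update z r ℓ) X' := sum_eq_single ℓ (fun a _ ha => hzero a ha) (by simp)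

end Marginal

section Restriction

variable {ι : Type} [DecidableEq ι] {d : ι → ℕ} {s : Finset ι}

theorem restrict_update_of_notMem {β : ι → Type} (x : ∀ i, β i) {r : ι} (a : β r)
    (hr : r ∉ s) : (fun k : s => update x r a k) = fun k : s => x k :=
  update_comp_eq_of_forall_ne' x a fun k h => hr (h ▸ k.2)

theorem restrict_decide_eq_false {r : ι} (hr : r ∉ s) :
    (fun k : s => decide (k.1 = r)) = fun _ => false :=
  funext fun k => decide_eq_false fun h => hr (h ▸ k.2)

theorem restrict_ite_or_eq {i j r : ι} (h : ∀ k ∈ s, (k = i ∨ k = j ↔ k = r)) :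
    (fun k : s => if k.1 = i ∨ k.1 = j then Fin.last (d k + 1) else 0) =
      fun k : s => update (fun i => (0 : Fin (d i + 2))) r (Fin.last (d r + 1)) k := by
  funext k
  simp only [h k k.2]
  by_cases hk : k.1 = r
  · subst hk
    simp
  · simp [hk]

theorem restrict_decide_or_eq {i j r : ι} (h : ∀ k ∈ s, (k = i ∨ k = j ↔ k = r)) :
    (fun k : s => decide (k.1 = i ∨ k.1 = j)) = fun k : s => decide (k.1 = r) :=
  funext fun k => decide_eq_decide.2 (h k k.2)

theorem NoSignaling.pos_restrict_update_last
    {B : (∀ i : s, Fin (d i + 2)) → (s → Bool) → ℝ}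
    (hns : NoSignaling (fun i : s => d i + 2) B) (hB : IsBox (fun i : s => d i + 2) B)
    (h0 : 0 < B (fun _ => 0) (fun _ => false)) {r : ι} (hr : r ∈ s)
    (hzero : ∀ a ≠ Fin.last (d r + 1),
      B (fun k : s => update (fun i => (0 : Fin (d i + 2))) r a k)
        (fun k : s => decide (k.1 = r)) = 0) :
    0 < B (fun k : s => update (fun i => (0 : Fin (d i + 2))) r (Fin.last (d r + 1)) k)
      (fun k : s => decide (k.1 = r)) := by
  have hupd : ∀ a, (fun k : s => update (fun i => (0 : Fin (d i + 2))) r a k) =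
      update (fun _ => 0) ⟨r, hr⟩ a :=
    update_comp_eq_of_injective' (fun i => (0 : Fin (d i + 2))) Subtype.val_injective ⟨r, hr⟩
  simp only [hupd] at hzero ⊢
  refine h0.trans_le (hns.le_apply_update hB (fun k hk => ?_) _ hzero)
  exact (decide_eq_false fun h => hk (Subtype.ext h)).symm

end Restriction

section Bipartition

variable {ι : Type} [Fintype ι] [DecidableEq ι] {d : ι → ℕ} {α : Finset ι}
  {Q : (∀ i : α, Fin (d i + 2)) → (α → Bool) → ℝ}
  {R : (∀ i : (αᶜ : Finset ι), Fin (d i + 2)) → ((αᶜ : Finset ι) → Bool) → ℝ}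
  {P : (∀ i, Fin (d i + 2)) → (ι → Bool) → ℝ}

theorem hardy_left_pos (hQns : NoSignaling (fun i : α => d i + 2) Q)
    (hQ : IsBox (fun i : α => d i + 2) Q)
    (hP : ∀ x X, P x X =
      Q (fun i => x i) (fun i => X i) * R (fun i => x i) (fun i => X i))
    (hQ0 : 0 < Q (fun _ => 0) (fun _ => false)) (hR0 : 0 < R (fun _ => 0) (fun _ => false))
    {r : ι} (hr : r ∈ α)
    (h2 : ∀ x : ∀ i, Fin (d i + 2), x r ≠ Fin.last (d r + 1) →
      (∀ i, i ≠ r → x i = 0) →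
      P x (fun i => decide (i = r)) = 0) :
    0 < Q (fun k : α => update (fun i => (0 : Fin (d i + 2))) r (Fin.last (d r + 1)) k)
      (fun k : α => decide (k.1 = r)) := by
  refine hQns.pos_restrict_update_last hQ hQ0 hr fun a ha => ?_
  have h := h2 (update (fun i => 0) r a) (by rwa [update_self]) fun i hi => update_of_ne hi _ _
  have hrc : r ∉ αᶜ := fun h => mem_compl.1 h hr
  rw [hP, restrict_update_of_notMem _ _ hrc, restrict_decide_eq_false hrc] at h
  exact (mul_eq_zero.1 h).resolve_right hR0.ne'

theorem hardy_right_pos (hRns : NoSignaling (fun i : (αᶜ : Finset ι) => d i + 2) R)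
    (hR : IsBox (fun i : (αᶜ : Finset ι) => d i + 2) R)
    (hP : ∀ x X, P x X =
      Q (fun i => x i) (fun i => X i) * R (fun i => x i) (fun i => X i))
    (hQ0 : 0 < Q (fun _ => 0) (fun _ => false)) (hR0 : 0 < R (fun _ => 0) (fun _ => false))
    {r : ι} (hr : r ∈ αᶜ)
    (h2 : ∀ x : ∀ i, Fin (d i + 2), x r ≠ Fin.last (d r + 1) →
      (∀ i, i ≠ r → x i = 0) →
      P x (fun i => decide (i = r)) = 0) :
    0 < R (fun k : (αᶜ : Finset ι) =>
        update (fun i => (0 : Fin (d i + 2))) r (Fin.last (d r + 1)) k)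
      (fun k : (αᶜ : Finset ι) => decide (k.1 = r)) := by
  refine hRns.pos_restrict_update_last hR hR0 hr fun a ha => ?_
  have h := h2 (update (fun i => 0) r a) (by rwa [update_self]) fun i hi => update_of_ne hi _ _
  have hrα : r ∉ α := mem_compl.1 hr
  rw [hP, restrict_update_of_notMem _ _ hrα, restrict_decide_eq_false hrα] at h
  exact (mul_eq_zero.1 h).resolve_left hQ0.ne'

theorem hardy_pair_pos
    (hP : ∀ x X, P x X =
      Q (fun i => x i) (fun i => X i) * R (fun i => x i) (fun i => X i))
    (hQpos : ∀ r ∈ α,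
      0 < Q (fun k : α => update (fun i => (0 : Fin (d i + 2))) r (Fin.last (d r + 1)) k)
        (fun k : α => decide (k.1 = r)))
    (hRpos : ∀ r ∈ αᶜ,
      0 < R (fun k : (αᶜ : Finset ι) =>
          update (fun i => (0 : Fin (d i + 2))) r (Fin.last (d r + 1)) k)
        (fun k : (αᶜ : Finset ι) => decide (k.1 = r)))
    {i j r t : ι} (hr : r ∈ α) (ht : t ∉ α)
    (hrt : ∀ k, (k = i ∨ k = j ↔ k = r ∨ k = t)) :
    0 < P (fun k => if k = i ∨ k = j then Fin.last (d k + 1) else 0)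
      (fun k => decide (k = i ∨ k = j)) := by
  have hα : ∀ k ∈ α, (k = i ∨ k = j ↔ k = r) := fun k hk => by
    rw [hrt, or_iff_left (ne_of_mem_of_not_mem hk ht)]
  have hαc : ∀ k ∈ αᶜ, (k = i ∨ k = j ↔ k = t) := fun k hk => by
    rw [hrt, or_iff_right (ne_of_mem_of_not_mem hr (mem_compl.1 hk)).symm]
  rw [hP, restrict_ite_or_eq hα, restrict_decide_or_eq hα, restrict_ite_or_eq hαc,
    restrict_decide_or_eq hαc]
  exact mul_pos (hQpos r hr) (hRpos t (mem_compl.2 ht))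

end Bipartition

theorem stmt_6_general {N : ℕ} (d : Fin N → ℕ)
    (α : Finset (Fin N)) (hα : α.Nonempty) (hαc : (αᶜ : Finset (Fin N)).Nonempty)
    (Q : (∀ i : α, Fin (d i + 2)) → (α → Bool) → ℝ)
    (R : (∀ i : (αᶜ : Finset (Fin N)), Fin (d i + 2)) →
      ((αᶜ : Finset (Fin N)) → Bool) → ℝ)
    (hQ : IsBox (fun i : α => d i + 2) Q)
    (hQns : NoSignaling (fun i : α => d i + 2) Q)
    (hR : IsBox (fun i : (αᶜ : Finset (Fin N)) => d i + 2) R)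
    (hRns : NoSignaling (fun i : (αᶜ : Finset (Fin N)) => d i + 2) R)
    (P : (∀ i, Fin (d i + 2)) → (Fin N → Bool) → ℝ)
    (hP : ∀ x X, P x X =
      Q (fun i => x i) (fun i => X i) * R (fun i => x i) (fun i => X i))
    (q : ℝ) (hq : 0 < q)
    (h1 : P (fun _ => 0) (fun _ => false) = q)
    (h2 : ∀ (r : Fin N) (x : ∀ i, Fin (d i + 2)),
      x r ≠ Fin.last (d r + 1) → (∀ i, i ≠ r → x i = 0) →
      P x (fun i => decide (i = r)) = 0)
    (j : Fin N)
    (h3 : ∀ i : Fin N, i ≠ j →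
      P (fun k => if k = i ∨ k = j then Fin.last (d k + 1) else 0)
        (fun k => decide (k = i ∨ k = j)) = 0) :
    False := by
  rw [← h1, hP] at hq
  have hQ0 : 0 < Q (fun _ => 0) (fun _ => false) := pos_of_mul_pos_left hq (hR.1 _ _)
  have hR0 : 0 < R (fun _ => 0) (fun _ => false) := pos_of_mul_pos_right hq (hQ.1 _ _)
  have hQpos := fun r hr => hardy_left_pos hQns hQ hP hQ0 hR0 hr (h2 r)
  have hRpos := fun r hr => hardy_right_pos hRns hR hP hQ0 hR0 hr (h2 r)
  by_cases hj : j ∈ α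
  · obtain ⟨i, hi⟩ := hαc
    have hi : i ∉ α := mem_compl.1 hi
    exact (hardy_pair_pos hP hQpos hRpos hj hi fun _ => or_comm).ne'
      (h3 i (ne_of_mem_of_not_mem hj hi).symm)
  · obtain ⟨i, hi⟩ := hα
    exact (hardy_pair_pos hP hQpos hRpos hi hj fun _ => Iff.rfl).ne'
      (h3 i (ne_of_mem_of_not_mem hi hj))

/-- No product of no-signaling boxes across a nontrivial bipartition `(α, αᶜ)`
satisfies the `N`-partite higher-dimensional Hardy conditions. -/
theorem stmt_6 {N : ℕ} (hN : 2 ≤ N) (d : Fin N → ℕ)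
    (α : Finset (Fin N)) (hα : α.Nonempty) (hαc : (αᶜ : Finset (Fin N)).Nonempty)
    (Q : (∀ i : α, Fin (d i + 2)) → (α → Bool) → ℝ)
    (R : (∀ i : (αᶜ : Finset (Fin N)), Fin (d i + 2)) →
      ((αᶜ : Finset (Fin N)) → Bool) → ℝ)
    (hQ : IsBox (fun i : α => d i + 2) Q)
    (hQns : NoSignaling (fun i : α => d i + 2) Q)
    (hR : IsBox (fun i : (αᶜ : Finset (Fin N)) => d i + 2) R)
    (hRns : NoSignaling (fun i : (αᶜ : Finset (Fin N)) => d i + 2) R)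
    (P : (∀ i, Fin (d i + 2)) → (Fin N → Bool) → ℝ)
    (hP : ∀ x X, P x X =
      Q (fun i => x i) (fun i => X i) * R (fun i => x i) (fun i => X i))
    (q : ℝ) (hq : 0 < q)
    (h1 : P (fun _ => 0) (fun _ => false) = q)
    (h2 : ∀ (r : Fin N) (x : ∀ i, Fin (d i + 2)),
      x r ≠ Fin.last (d r + 1) → (∀ i, i ≠ r → x i = 0) →
      P x (fun i => decide (i = r)) = 0)
    (j : Fin N)
    (h3 : ∀ i : Fin N, i ≠ j →
      P (fun k => if k = i ∨ k = j then Fin.last (d k + 1) else 0)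
        (fun k => decide (k = i ∨ k = j)) = 0) :
    False :=
  stmt_6_general d α hα hαc Q R hQ hQns hR hRns P hP q hq h1 h2 j h3
end

section
/- Let N ≥ 2. If a joint distribution P(x₁…x_N | X₁…X_N) can be written as a convex combination over bipartitions of products of no-signaling distributions (an NS₂-local model), and P satisfies the higher-dimensional Hardy conditions (first probability q > 0, the 2N−1 zero conditions of equation (7)), then we reach a contradiction. Hence every distribution satisfying the Hardy conditions (7) is genuinely N-way no-signaling nonlocal. -/
lemma hardy_side {N : ℕ} (d : Fin N → ℕ) (C : Finset (Fin N))
    (T : (∀ i : C, Fin (d i + 2)) → (C → Bool) → ℝ)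
    (hT0 : ∀ x X, 0 ≤ T x X)
    (hTns : NoSignaling (fun i : C => d i + 2) T)
    (p : Fin N) (hp : p ∈ C)
    (hpos : 0 < T (fun _ => 0) (fun _ => false))
    (hzero : ∀ y : ∀ i : C, Fin (d i + 2),
        (∀ i : C, (i : Fin N) ≠ p → y i = 0) → y ⟨p, hp⟩ ≠ Fin.last (d p + 1) →
        T y (fun i => decide ((i : Fin N) = p)) = 0) :
    0 < T (fun i => if (i : Fin N) = p then Fin.last (d i + 1) else 0)
        (fun i => decide ((i : Fin N) = p)) := by
  classical
  set S : Finset C := Finset.univ.erase ⟨p, hp⟩ with hS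
  have hagree : ∀ i ∈ S, (fun i : C => decide ((i : Fin N) = p)) i = (fun _ => false) i := by
    intro i hi
    have hne : i ≠ (⟨p, hp⟩ : C) := (Finset.mem_erase.mp hi).1
    have : (i : Fin N) ≠ p := fun h => hne (Subtype.ext h)
    simp [this]
  have hns := hTns S (fun _ => 0) (fun i => decide ((i : Fin N) = p)) (fun _ => false) hagree
  have hrhs : T (fun _ => 0) (fun _ => false) ≤
      ∑ y : ∀ i : C, Fin (d i + 2),
        if ∀ i ∈ S, y i = (fun _ => (0 : Fin _)) i then T y (fun _ => false) else 0 := by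
    have h := Finset.single_le_sum (f := fun y : ∀ i : C, Fin (d i + 2) =>
        if ∀ i ∈ S, y i = (fun _ => (0 : Fin _)) i then T y (fun _ => false) else 0)
      (fun y _ => by dsimp only; split
                     · exact hT0 _ _
                     · exact le_rfl)
      (Finset.mem_univ (fun _ => 0 : ∀ i : C, Fin (d i + 2)))
    simpa using h
  have hlhs : (∑ y : ∀ i : C, Fin (d i + 2),
      if ∀ i ∈ S, y i = (fun _ => (0 : Fin _)) i
      then T y (fun i => decide ((i : Fin N) = p)) else 0)
      = T (fun i => if (i : Fin N) = p then Fin.last (d i + 1) else 0)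
          (fun i => decide ((i : Fin N) = p)) := by
    rw [Finset.sum_eq_single (fun i : C => if (i : Fin N) = p then Fin.last (d i + 1) else 0)]
    · rw [if_pos]
      intro i hi
      have hne : (i : Fin N) ≠ p := fun h => (Finset.mem_erase.mp hi).1 (Subtype.ext h)
      simp [hne]
    · intro y _ hy
      by_cases hc : ∀ i ∈ S, y i = (fun _ => (0 : Fin _)) i
      · rw [if_pos hc]
        have h0 : ∀ i : C, (i : Fin N) ≠ p → y i = 0 := by
          intro i hi
          exact hc i (Finset.mem_erase.mpr ⟨fun h => hi (congrArg Subtype.val h),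
            Finset.mem_univ i⟩)
        have hne : y ⟨p, hp⟩ ≠ Fin.last (d p + 1) := by
          intro hl
          apply hy
          funext i
          by_cases hip : (i : Fin N) = p
          · have hieq : i = (⟨p, hp⟩ : C) := Subtype.ext hip
            subst hieq
            simpa using hl
          · rw [h0 i hip]
            simp [hip]
        exact hzero y h0 hne
      · rw [if_neg hc]
    · intro h; exact absurd (Finset.mem_univ _) h
  have := hpos.trans_le (hrhs.trans_eq (hns.symm.trans hlhs))
  exact this

lemma hardy_aux {N : ℕ} (d : Fin N → ℕ) (A B : Finset (Fin N))
    (hAB : ∀ k, k ∈ B ↔ k ∉ A)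
    (Q : (∀ i : A, Fin (d i + 2)) → (A → Bool) → ℝ)
    (R : (∀ i : B, Fin (d i + 2)) → (B → Bool) → ℝ)
    (hQ0 : ∀ x X, 0 ≤ Q x X) (hR0 : ∀ x X, 0 ≤ R x X)
    (hQns : NoSignaling (fun i : A => d i + 2) Q)
    (hRns : NoSignaling (fun i : B => d i + 2) R)
    (j : Fin N) (hj : j ∈ A) (i0 : Fin N) (hi0 : i0 ∈ B)
    (h1 : 0 < Q (fun _ => 0) (fun _ => false) * R (fun _ => 0) (fun _ => false))
    (h2 : ∀ (r : Fin N) (x : ∀ i, Fin (d i + 2)),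
      x r ≠ Fin.last (d r + 1) → (∀ i, i ≠ r → x i = 0) →
      Q (fun i => x i) (fun i => decide ((i : Fin N) = r)) *
        R (fun i => x i) (fun i => decide ((i : Fin N) = r)) = 0)
    (h3 : Q (fun i => if (i : Fin N) = i0 ∨ (i : Fin N) = j then Fin.last (d i + 1) else 0)
            (fun i => decide ((i : Fin N) = i0 ∨ (i : Fin N) = j)) *
          R (fun i => if (i : Fin N) = i0 ∨ (i : Fin N) = j then Fin.last (d i + 1) else 0)
            (fun i => decide ((i : Fin N) = i0 ∨ (i : Fin N) = j)) = 0) : False := by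
  classical
  have hnotB : ∀ k, k ∈ A → k ∉ B := fun k hk hkB => (hAB k).mp hkB hk
  have hQu : 0 < Q (fun _ => 0) (fun _ => false) := by
    rcases lt_or_eq_of_le (hQ0 (fun _ => 0) (fun _ => false)) with h | h
    · exact h
    · rw [← h, zero_mul] at h1; exact absurd h1 (lt_irrefl 0)
  have hRu : 0 < R (fun _ => 0) (fun _ => false) := by
    rcases lt_or_eq_of_le (hR0 (fun _ => 0) (fun _ => false)) with h | h
    · exact h
    · rw [← h, mul_zero] at h1; exact absurd h1 (lt_irrefl 0)
  -- Q-side zero condition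
  have hzeroQ : ∀ y : ∀ i : A, Fin (d i + 2),
      (∀ i : A, (i : Fin N) ≠ j → y i = 0) → y ⟨j, hj⟩ ≠ Fin.last (d j + 1) →
      Q y (fun i => decide ((i : Fin N) = j)) = 0 := by
    intro y hy0 hyj
    set x : ∀ k, Fin (d k + 2) := fun k => if h : k ∈ A then y ⟨k, h⟩ else 0 with hx
    have hxj : x j = y ⟨j, hj⟩ := by simp only [hx]; rw [dif_pos hj]
    have hx0 : ∀ i, i ≠ j → x i = 0 := by
      intro i hij
      by_cases h : i ∈ A
      · simp only [hx]; rw [dif_pos h]; exact hy0 ⟨i, h⟩ hij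
      · simp only [hx]; rw [dif_neg h]
    have h2' := h2 j x (by rw [hxj]; exact hyj) hx0
    have eA : (fun i : A => x i) = y := by
      funext i; simp only [hx]; rw [dif_pos i.2]
    have eB : (fun i : B => x i) = (fun _ => 0) := by
      funext i; simp only [hx]; rw [dif_neg ((hAB i).mp i.2)]
    have eXB : (fun i : B => decide ((i : Fin N) = j)) = (fun _ => false) := by
      funext i
      have : (i : Fin N) ≠ j := fun h => (hAB i).mp i.2 (by rw [h]; exact hj)
      simp [this]
    rw [eA, eB, eXB] at h2'
    exact (mul_eq_zero.mp h2').resolve_right (ne_of_gt hRu)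
  -- R-side zero condition
  have hzeroR : ∀ y : ∀ i : B, Fin (d i + 2),
      (∀ i : B, (i : Fin N) ≠ i0 → y i = 0) → y ⟨i0, hi0⟩ ≠ Fin.last (d i0 + 1) →
      R y (fun i => decide ((i : Fin N) = i0)) = 0 := by
    intro y hy0 hyi
    set x : ∀ k, Fin (d k + 2) := fun k => if h : k ∈ B then y ⟨k, h⟩ else 0 with hx
    have hxi : x i0 = y ⟨i0, hi0⟩ := by simp only [hx]; rw [dif_pos hi0]
    have hx0 : ∀ i, i ≠ i0 → x i = 0 := by
      intro i hii
      by_cases h : i ∈ B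
      · simp only [hx]; rw [dif_pos h]; exact hy0 ⟨i, h⟩ hii
      · simp only [hx]; rw [dif_neg h]
    have h2' := h2 i0 x (by rw [hxi]; exact hyi) hx0
    have eB : (fun i : B => x i) = y := by
      funext i; simp only [hx]; rw [dif_pos i.2]
    have eA : (fun i : A => x i) = (fun _ => 0) := by
      funext i; simp only [hx]; rw [dif_neg (hnotB i i.2)]
    have eXA : (fun i : A => decide ((i : Fin N) = i0)) = (fun _ => false) := by
      funext i
      have : (i : Fin N) ≠ i0 := fun h => hnotB i i.2 (h ▸ hi0)
      simp [this]
    rw [eB, eA, eXA] at h2'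
    exact (mul_eq_zero.mp h2').resolve_left (ne_of_gt hQu)
  have hQhat := hardy_side d A Q hQ0 hQns j hj hQu hzeroQ
  have hRhat := hardy_side d B R hR0 hRns i0 hi0 hRu hzeroR
  have e1 : (fun i : A => if (i : Fin N) = i0 ∨ (i : Fin N) = j
        then Fin.last (d i + 1) else (0 : Fin (d i + 2)))
      = (fun i : A => if (i : Fin N) = j then Fin.last (d i + 1) else 0) := by
    funext i
    have hni : (i : Fin N) ≠ i0 := fun h => hnotB i i.2 (h ▸ hi0)
    simp [hni]
  have e2 : (fun i : A => decide ((i : Fin N) = i0 ∨ (i : Fin N) = j))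
      = (fun i : A => decide ((i : Fin N) = j)) := by
    funext i
    have hni : (i : Fin N) ≠ i0 := fun h => hnotB i i.2 (h ▸ hi0)
    rw [decide_eq_decide]
    tauto
  have e3 : (fun i : B => if (i : Fin N) = i0 ∨ (i : Fin N) = j
        then Fin.last (d i + 1) else (0 : Fin (d i + 2)))
      = (fun i : B => if (i : Fin N) = i0 then Fin.last (d i + 1) else 0) := by
    funext i
    have hnj : (i : Fin N) ≠ j := fun h => (hAB i).mp i.2 (by rw [h]; exact hj)
    simp [hnj]
  have e4 : (fun i : B => decide ((i : Fin N) = i0 ∨ (i : Fin N) = j))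
      = (fun i : B => decide ((i : Fin N) = i0)) := by
    funext i
    have hnj : (i : Fin N) ≠ j := fun h => (hAB i).mp i.2 (by rw [h]; exact hj)
    rw [decide_eq_decide]
    tauto
  rw [e1, e2, e3, e4] at h3
  exact absurd h3 (ne_of_gt (mul_pos hQhat hRhat))

/-- No `NS₂`-local model (a convex combination, over nontrivial bipartitions
`(α l, (α l)ᶜ)`, of products of no-signaling boxes) satisfies the `N`-partite
higher-dimensional Hardy conditions; hence any distribution satisfying them is
genuinely `N`-way no-signaling nonlocal. -/
theorem stmt_7 {N : ℕ} (hN : 2 ≤ N) (d : Fin N → ℕ)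
    {Λ : Type} [Fintype Λ]
    (w : Λ → ℝ) (hw : ∀ l, 0 ≤ w l) (hwsum : ∑ l, w l = 1)
    (α : Λ → Finset (Fin N))
    (hα : ∀ l, (α l).Nonempty) (hαc : ∀ l, ((α l)ᶜ : Finset (Fin N)).Nonempty)
    (Q : ∀ l : Λ, (∀ i : (α l), Fin (d i + 2)) → ((α l) → Bool) → ℝ)
    (R : ∀ l : Λ, (∀ i : ((α l)ᶜ : Finset (Fin N)), Fin (d i + 2)) →
      (((α l)ᶜ : Finset (Fin N)) → Bool) → ℝ)
    (hQ : ∀ l, IsBox (fun i : (α l) => d i + 2) (Q l))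
    (hQns : ∀ l, NoSignaling (fun i : (α l) => d i + 2) (Q l))
    (hR : ∀ l, IsBox (fun i : ((α l)ᶜ : Finset (Fin N)) => d i + 2) (R l))
    (hRns : ∀ l, NoSignaling (fun i : ((α l)ᶜ : Finset (Fin N)) => d i + 2) (R l))
    (P : (∀ i, Fin (d i + 2)) → (Fin N → Bool) → ℝ)
    (hP : ∀ x X, P x X = ∑ l, w l *
      (Q l (fun i => x i) (fun i => X i) * R l (fun i => x i) (fun i => X i)))
    (q : ℝ) (hq : 0 < q)
    (h1 : P (fun _ => 0) (fun _ => false) = q)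
    (h2 : ∀ (r : Fin N) (x : ∀ i, Fin (d i + 2)),
      x r ≠ Fin.last (d r + 1) → (∀ i, i ≠ r → x i = 0) →
      P x (fun i => decide (i = r)) = 0)
    (j : Fin N)
    (h3 : ∀ i : Fin N, i ≠ j →
      P (fun k => if k = i ∨ k = j then Fin.last (d k + 1) else 0)
        (fun k => decide (k = i ∨ k = j)) = 0) :
    False := by
  classical
  have hterm_nonneg : ∀ (l : Λ) (x : ∀ i, Fin (d i + 2)) (X : Fin N → Bool),
      0 ≤ w l * (Q l (fun i => x i) (fun i => X i) * R l (fun i => x i) (fun i => X i)) :=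
    fun l x X => mul_nonneg (hw l) (mul_nonneg ((hQ l).1 _ _) ((hR l).1 _ _))
  -- find a contributing bipartition
  obtain ⟨l, -, hl⟩ : ∃ l ∈ (Finset.univ : Finset Λ), (0 : ℝ) <
      w l * (Q l (fun i => (0 : Fin (d i + 2))) (fun _ => false) *
        R l (fun i => (0 : Fin (d i + 2))) (fun _ => false)) := by
    apply Finset.exists_lt_of_sum_lt (f := fun _ => (0 : ℝ))
    rw [Finset.sum_const_zero]
    calc (0 : ℝ) < q := hq
    _ = _ := by rw [← h1, hP]
  have hwl : w l ≠ 0 := by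
    intro h; rw [h, zero_mul] at hl; exact lt_irrefl 0 hl
  have hFl1 : 0 < Q l (fun i => (0 : Fin (d i + 2))) (fun _ => false) *
      R l (fun i => (0 : Fin (d i + 2))) (fun _ => false) := by
    rcases lt_or_eq_of_le (mul_nonneg ((hQ l).1 _ _) ((hR l).1 _ _)) with h | h
    · exact h
    · exfalso; rw [← h, mul_zero] at hl; exact lt_irrefl 0 hl
  have hzero_l : ∀ (x : ∀ i, Fin (d i + 2)) (X : Fin N → Bool), P x X = 0 →
      Q l (fun i => x i) (fun i => X i) * R l (fun i => x i) (fun i => X i) = 0 := by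
    intro x X h0
    have hsum : ∑ l', w l' *
        (Q l' (fun i => x i) (fun i => X i) * R l' (fun i => x i) (fun i => X i)) = 0 := by
      rw [← hP]; exact h0
    have := (Finset.sum_eq_zero_iff_of_nonneg
      (fun l' _ => hterm_nonneg l' x X)).mp hsum l (Finset.mem_univ l)
    exact (mul_eq_zero.mp this).resolve_left hwl
  by_cases hjA : j ∈ α l
  · obtain ⟨i0, hi0⟩ := hαc l
    have hne : i0 ≠ j := fun h => (Finset.mem_compl.mp hi0) (h ▸ hjA)
    exact hardy_aux d (α l) ((α l)ᶜ) (fun k => Finset.mem_compl)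
      (Q l) (R l) ((hQ l).1) ((hR l).1) (hQns l) (hRns l)
      j hjA i0 hi0 hFl1
      (fun r x hx1 hx2 => hzero_l x (fun i => decide (i = r)) (h2 r x hx1 hx2))
      (hzero_l _ _ (h3 i0 hne))
  · have hjAc : j ∈ ((α l)ᶜ : Finset (Fin N)) := Finset.mem_compl.mpr hjA
    obtain ⟨i0, hi0⟩ := hα l
    have hne : i0 ≠ j := fun h => hjA (h ▸ hi0)
    exact hardy_aux d ((α l)ᶜ) (α l)
      (fun k => by simp [Finset.mem_compl])
      (R l) (Q l) ((hR l).1) ((hQ l).1) (hRns l) (hQns l)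
      j hjAc i0 hi0 (by rw [mul_comm]; exact hFl1)
      (fun r x hx1 hx2 => by
        rw [mul_comm]
        exact hzero_l x (fun i => decide (i = r)) (h2 r x hx1 hx2))
      (by rw [mul_comm]; exact hzero_l _ _ (h3 i0 hne))
end

section
/- Under the deterministic local hidden-variable interpretation, the N-partite qubit relaxed Hardy conditions (8) are contradictory: for any family of response functions a_i : {u_i,v_i} → {1,2}, i = 1..N, with a_i(u_i) = 1 for all i (the event of nonzero probability), the zero-probability conditions that for each r the event (a_r(v_r) = 1 and a_k(u_k) = 1 for all k ≠ r) does not occur force a_r(v_r) = 2 for all r, and then for the fixed j and any i ≠ j the event (a_i(v_i) = 2, a_j(v_j) = 2, and a_k(u_k) = 1 for all k ∉ {i,j}) is realized, contradicting its zero probability. -/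
/-- `N`-partite deterministic qubit Hardy contradiction: party `i`'s response function is
`a i : Fin 2 → Fin 2` (setting `0 = u_i`, `1 = v_i`; outcomes `1,2` encoded `0,1`). -/
theorem stmt_17 {N : ℕ} (hN : 2 ≤ N) (j : Fin N) :
    ¬ ∃ a : Fin N → Fin 2 → Fin 2,
      (∀ i, a i 0 = 0) ∧
      (∀ r, ¬ (a r 1 = 0 ∧ ∀ k, k ≠ r → a k 0 = 0)) ∧
      (∀ i, i ≠ j →
        ¬ (a i 1 = 1 ∧ a j 1 = 1 ∧ ∀ k, k ≠ i → k ≠ j → a k 0 = 0)) := by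
  rintro ⟨a, h1, h2, h3⟩
  have hv : ∀ r, a r 1 = 1 := by
    intro r
    have := h2 r
    have h0 : a r 1 ≠ 0 := fun h => this ⟨h, fun k _ => h1 k⟩
    omega
  have : Nontrivial (Fin N) := Fin.nontrivial_iff_two_le.mpr hN
  obtain ⟨i, hi⟩ := exists_ne j
  exact h3 i hi ⟨hv i, hv j, fun k _ _ => h1 k⟩
end
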